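/- arXiv:2306.00649 — 3 statements merged into one kernel-verified Lean document; each statement's English description precedes it below -/
import Mathlib

section
/- Let J : ℝ → ℝ be nonnegative, even, integrable with compact support contained in [-K, K] where K ≤ 2R, and let β > 0. Then for every x ∈ (-R, R), ∫_{-∞}^{∞} J(x - y) e^{-βy} cos(πy/(2R)) dy ≤ ∫_{-R}^{R} J(x - y) e^{-βy} cos(πy/(2R)) dy. -/
open MeasureTheory Real

/-- For `J` nonnegative, even, integrable, supported in `[-K, K]` with `K ≤ 2R`, `β > 0`,
and `x ∈ (-R, R)`, the integral over all of `ℝ` of `J(x-y) e^{-βy} cos(πy/(2R))` is at most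
the integral over `(-R, R)`. -/
theorem stmt2 (J : ℝ → ℝ) (K R β : ℝ) (hR : 0 < R) (hβ : 0 < β) (hKR : K ≤ 2 * R)
    (hJ0 : ∀ z, 0 ≤ J z) (hJe : ∀ z, J (-z) = J z) (hJint : Integrable J)
    (hsupp : ∀ z, z ∉ Set.Icc (-K) K → J z = 0)
    (x : ℝ) (hx : x ∈ Set.Ioo (-R) R) :
    (∫ y : ℝ, J (x - y) * Real.exp (-β * y) * Real.cos (π * y / (2 * R))) ≤
      ∫ y in Set.Ioo (-R) R, J (x - y) * Real.exp (-β * y) * Real.cos (π * y / (2 * R)) := by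
  obtain ⟨hx1, hx2⟩ := hx
  set f : ℝ → ℝ := fun y => J (x - y) * Real.exp (-β * y) * Real.cos (π * y / (2 * R)) with hf
  have hJint' : Integrable (fun y => J (x - y)) := hJint.comp_sub_left x
  have hcont1 : Continuous fun y : ℝ => Real.exp (-β * y) :=
    Real.continuous_exp.comp (continuous_const.mul continuous_id)
  have hcont2 : Continuous fun y : ℝ => Real.cos (π * y / (2 * R)) :=
    Real.continuous_cos.comp ((continuous_const.mul continuous_id).div_const _)
  have hfm : AEStronglyMeasurable f volume :=
    (hJint'.aestronglyMeasurable.mul hcont1.aestronglyMeasurable).mul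
      hcont2.aestronglyMeasurable
  -- pointwise bound giving integrability
  have hbd : ∀ y, ‖f y‖ ≤ J (x - y) * Real.exp (β * (K - x)) := by
    intro y
    by_cases hz : J (x - y) = 0
    · simp [hf, hz]
    · have hmem : x - y ∈ Set.Icc (-K) K := by
        by_contra h; exact hz (hsupp _ h)
      obtain ⟨h1, h2⟩ := hmem
      have hexp : Real.exp (-β * y) ≤ Real.exp (β * (K - x)) := by
        apply Real.exp_le_exp.2; nlinarith
      have : ‖f y‖ = J (x - y) * Real.exp (-β * y) * |Real.cos (π * y / (2 * R))| := by
        rw [hf]; rw [Real.norm_eq_abs, abs_mul, abs_mul,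
          abs_of_nonneg (hJ0 _), abs_of_nonneg (Real.exp_pos _).le]
      rw [this]
      calc J (x - y) * Real.exp (-β * y) * |Real.cos (π * y / (2 * R))|
          ≤ J (x - y) * Real.exp (-β * y) * 1 := by
            apply mul_le_mul_of_nonneg_left (Real.abs_cos_le_one _)
            exact mul_nonneg (hJ0 _) (Real.exp_pos _).le
        _ = J (x - y) * Real.exp (-β * y) := by ring
        _ ≤ J (x - y) * Real.exp (β * (K - x)) :=
            mul_le_mul_of_nonneg_left hexp (hJ0 _)
  have hfi : Integrable f := (hJint'.mul_const _).mono' hfm (Filter.Eventually.of_forall hbd)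
  -- nonpositivity off (-R, R)
  have hnonpos : ∀ y ∈ (Set.Ioo (-R) R)ᶜ, f y ≤ 0 := by
    intro y hy
    by_cases hz : J (x - y) = 0
    · simp [hf, hz]
    have hmem : x - y ∈ Set.Icc (-K) K := by
      by_contra h; exact hz (hsupp _ h)
    obtain ⟨h1, h2⟩ := hmem
    have hy' : y ≤ -R ∨ R ≤ y := by
      simp only [Set.mem_compl_iff, Set.mem_Ioo, not_and, not_lt] at hy
      rcases lt_or_ge (-R) y with h | h
      · exact Or.inr (hy h)
      · exact Or.inl h
    have hcos : Real.cos (π * y / (2 * R)) ≤ 0 := by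
      have hπ := Real.pi_pos
      rcases hy' with h | h
      · have hy3 : -y < 3 * R := by nlinarith
        have : Real.cos (π * y / (2 * R)) = Real.cos (π * (-y) / (2 * R)) := by
          rw [show π * (-y) / (2 * R) = -(π * y / (2 * R)) by ring, Real.cos_neg]
        rw [this]
        apply Real.cos_nonpos_of_pi_div_two_le_of_le
        · rw [le_div_iff₀ (by linarith)]; nlinarith
        · rw [div_le_iff₀ (by linarith)]; nlinarith
      · have hy3 : y < 3 * R := by nlinarith
        apply Real.cos_nonpos_of_pi_div_two_le_of_le
        · rw [le_div_iff₀ (by linarith)]; nlinarith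
        · rw [div_le_iff₀ (by linarith)]; nlinarith
    exact mul_nonpos_of_nonneg_of_nonpos
      (mul_nonneg (hJ0 _) (Real.exp_pos _).le) hcos
  have hsplit : (∫ y in Set.Ioo (-R) R, f y) + (∫ y in (Set.Ioo (-R) R)ᶜ, f y) = ∫ y, f y :=
    integral_add_compl measurableSet_Ioo hfi
  have hle : (∫ y in (Set.Ioo (-R) R)ᶜ, f y) ≤ 0 :=
    setIntegral_nonpos measurableSet_Ioo.compl hnonpos
  have : (∫ y, f y) ≤ ∫ y in Set.Ioo (-R) R, f y := by linarith
  exact this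
end

section
/- Let v : ℝ × [t₀, ∞) → ℝ be a bounded function, differentiable in t, satisfying 0 ≤ v(x, t) ≤ M for all x, t, and ∂v/∂t(x, t) ≤ d[∫ J(x-y) v(y, t) dy − v(x, t)] − r v(x, t) for all x ∈ ℝ, t ≥ t₀, where J ≥ 0 with ∫ J = 1 and d, r > 0. Then v(x, t) ≤ M e^{−r(t − t₀)} for all x ∈ ℝ and t ≥ t₀. -/
open MeasureTheory Real

/-! Since `v ≥ 0` and `J` is a probability density, `J * v` is bounded by any uniform bound on
`v`; hence a bound `v ≤ B` on `[t₀, ∞)` turns the inequality into the scalar one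
`v_t + (d + r) v ≤ d B`, and comparison with an ODE solution improves it. Starting from `v ≤ M`,
this Picard-type iteration gives `v ≤ M e^{-r(t-t₀)} + M (d(t-t₀))ⁿ / n!` for every `n`, and
letting `n → ∞` leaves the exponential bound. -/

theorem le_of_hasDerivAt_add_mul_le {f f' g g' : ℝ → ℝ} {a k : ℝ}
    (hf : ∀ s, a ≤ s → HasDerivAt f (f' s) s) (hg : ∀ s, a ≤ s → HasDerivAt g (g' s) s)
    (ha : f a ≤ g a) (hfg : ∀ s, a ≤ s → f' s + k * f s ≤ g' s + k * g s)
    {t : ℝ} (ht : a ≤ t) : f t ≤ g t := by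
  set w : ℝ → ℝ := fun s => (f s - g s) * exp (k * (s - a))
  have hw : ∀ s, a ≤ s →
      HasDerivAt w ((f' s - g' s + k * (f s - g s)) * exp (k * (s - a))) s := by
    intro s hs
    refine (((hf s hs).sub (hg s hs)).mul
      ((((hasDerivAt_id s).sub_const a).const_mul k).exp)).congr_deriv ?_
    simp only [id, mul_one, Pi.sub_apply]
    ring
  have hanti : AntitoneOn w (Set.Ici a) := by
    refine antitoneOn_of_hasDerivWithinAt_nonpos (convex_Ici a)
      (fun s hs => (hw s hs).continuousAt.continuousWithinAt)
      (fun s hs => (hw s (interior_subset hs)).hasDerivWithinAt) fun s hs => ?_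
    have := hfg s (interior_subset hs)
    exact mul_nonpos_of_nonpos_of_nonneg (by linarith) (exp_pos _).le
  have hwt : w t ≤ f a - g a := by
    simpa [w] using hanti Set.self_mem_Ici ht ht
  have : (f t - g t) * exp (k * (t - a)) ≤ 0 := hwt.trans (sub_nonpos.mpr ha)
  linarith [nonpos_of_mul_nonpos_left this (exp_pos _)]

theorem integral_kernel_mul_le {J u : ℝ → ℝ} {c : ℝ} (hJ0 : ∀ z, 0 ≤ J z)
    (hJ : ∫ z, J z = 1) (hu0 : ∀ y, 0 ≤ u y) (hu : ∀ y, u y ≤ c) (x : ℝ) :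
    ∫ y, J (x - y) * u y ≤ c :=
  calc ∫ y, J (x - y) * u y ≤ ∫ y, J (x - y) * c :=
        integral_mono_of_nonneg (.of_forall fun y => mul_nonneg (hJ0 _) (hu0 y))
          ((integrable_of_integral_eq_one hJ).comp_sub_left x |>.mul_const c)
          (.of_forall fun y => mul_le_mul_of_nonneg_left (hu y) (hJ0 _))
    _ = c := by rw [integral_mul_const, integral_sub_left_eq_self J volume x, hJ, one_mul]

noncomputable def picardBound (M r d t₀ : ℝ) (n : ℕ) (t : ℝ) : ℝ :=
  M * exp (-r * (t - t₀)) + M * (d * (t - t₀)) ^ n / n.factorial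

theorem hasDerivAt_picardBound_succ (M r d t₀ : ℝ) (n : ℕ) (t : ℝ) :
    HasDerivAt (picardBound M r d t₀ (n + 1))
      (d * picardBound M r d t₀ n t - (d + r) * (M * exp (-r * (t - t₀)))) t := by
  have hlin (c : ℝ) : HasDerivAt (fun t => c * (t - t₀)) c t := by
    simpa using ((hasDerivAt_id t).sub_const t₀).const_mul c
  refine (((hlin (-r)).exp.const_mul M).add
    ((((hlin d).pow (n + 1)).const_mul M).div_const ((n + 1).factorial : ℝ))).congr_deriv ?_
  rw [picardBound, Nat.factorial_succ, Nat.add_sub_cancel]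
  push_cast
  field_simp
  ring

theorem tendsto_picardBound (M r d t₀ t : ℝ) :
    Filter.Tendsto (fun n => picardBound M r d t₀ n t) Filter.atTop
      (nhds (M * exp (-r * (t - t₀)))) := by
  simp only [picardBound, mul_div_assoc]
  simpa using tendsto_const_nhds.add
    ((FloorSemiring.tendsto_pow_div_factorial_atTop (d * (t - t₀))).const_mul M)

theorem le_picardBound {J : ℝ → ℝ} {d r M t₀ : ℝ} (hd : 0 ≤ d) (hdr : 0 ≤ d + r)
    (hJ0 : ∀ z, 0 ≤ J z) (hJint : ∫ z : ℝ, J z = 1) {v vt : ℝ → ℝ → ℝ}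
    (hbd : ∀ x t, 0 ≤ v x t ∧ v x t ≤ M)
    (hderiv : ∀ x t, t₀ ≤ t → HasDerivAt (fun τ => v x τ) (vt x t) t)
    (hineq : ∀ x t, t₀ ≤ t →
      vt x t ≤ d * ((∫ y : ℝ, J (x - y) * v y t) - v x t) - r * v x t)
    (n : ℕ) (x : ℝ) {t : ℝ} (ht : t₀ ≤ t) : v x t ≤ picardBound M r d t₀ n t := by
  have hM : 0 ≤ M := (hbd x t).1.trans (hbd x t).2
  induction n generalizing x t with
  | zero =>
    have := (hbd x t).2
    simp only [picardBound, pow_zero, Nat.factorial_zero, Nat.cast_one, div_one, mul_one]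
    linarith [mul_nonneg hM (exp_pos (-r * (t - t₀))).le]
  | succ n ih =>
    refine le_of_hasDerivAt_add_mul_le (k := d + r) (hderiv x)
      (fun s _ => hasDerivAt_picardBound_succ M r d t₀ n s) ?_ (fun s hs => ?_) ht
    · simpa [picardBound] using (hbd x t₀).2
    · have hconv := integral_kernel_mul_le hJ0 hJint (fun y => (hbd y s).1)
        (fun y => ih y hs) x
      have hpow : 0 ≤ M * (d * (s - t₀)) ^ (n + 1) / (n + 1).factorial := by
        have : 0 ≤ d * (s - t₀) := mul_nonneg hd (by linarith)
        positivity
      have := hineq x s hs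
      simp only [picardBound] at hconv ⊢
      nlinarith [mul_le_mul_of_nonneg_left hconv hd, mul_nonneg hdr hpow]

theorem stmt7_general (J : ℝ → ℝ) (d r M t₀ : ℝ) (hd : 0 < d) (hr : 0 < r)
    (hJ0 : ∀ z, 0 ≤ J z) (hJint : ∫ z : ℝ, J z = 1)
    (v vt : ℝ → ℝ → ℝ)
    (hbd : ∀ x t, 0 ≤ v x t ∧ v x t ≤ M)
    (hderiv : ∀ x t, t₀ ≤ t → HasDerivAt (fun τ => v x τ) (vt x t) t)
    (hineq : ∀ x t, t₀ ≤ t →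
      vt x t ≤ d * ((∫ y : ℝ, J (x - y) * v y t) - v x t) - r * v x t) :
    ∀ x t, t₀ ≤ t → v x t ≤ M * Real.exp (-r * (t - t₀)) := fun x t ht =>
  ge_of_tendsto' (tendsto_picardBound M r d t₀ t) fun n =>
    le_picardBound hd.le (by linarith) hJ0 hJint hbd hderiv hineq n x ht

/-- If `0 ≤ v ≤ M` satisfies `∂v/∂t ≤ d[(J*v) - v] - r v` for `t ≥ t₀`, with `J ≥ 0`,
`∫ J = 1`, `d, r, M > 0`, then `v(x, t) ≤ M e^{-r(t - t₀)}` for all `x` and `t ≥ t₀`. -/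
theorem stmt7 (J : ℝ → ℝ) (d r M t₀ : ℝ) (hd : 0 < d) (hr : 0 < r) (hM : 0 < M)
    (hJ0 : ∀ z, 0 ≤ J z) (hJint : ∫ z : ℝ, J z = 1)
    (v vt : ℝ → ℝ → ℝ)
    (hbd : ∀ x t, 0 ≤ v x t ∧ v x t ≤ M)
    (hderiv : ∀ x t, t₀ ≤ t → HasDerivAt (fun τ => v x τ) (vt x t) t)
    (hineq : ∀ x t, t₀ ≤ t →
      vt x t ≤ d * ((∫ y : ℝ, J (x - y) * v y t) - v x t) - r * v x t) :
    ∀ x t, t₀ ≤ t → v x t ≤ M * Real.exp (-r * (t - t₀)) :=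
  stmt7_general J d r M t₀ hd hr hJ0 hJint v vt hbd hderiv hineq
end

section
/- Let φ(x, t) = η e^{μt} e^{−β(x−ct)} cos(π(x−ct)/(2R)) for x ∈ (−R + ct, R + ct) and φ = 0 otherwise, with η, β, R, μ, c > 0. Suppose c < (1/β)[m − μ + d ∫ e^{βy} J(y) cos(πy/(2R)) dy] and c = (2Rd/π) ∫ e^{βy} J(y) sin(πy/(2R)) dy, where J is continuous, even, nonnegative, ∫ J = 1, supp J ⊆ [−K, K] with K < 2R, and d, m > 0. Then for all x ∈ (−R + ct, R + ct) and t ∈ ℝ, d ∫ J(x − y) φ(y, t) dy + m φ(x, t) − ∂φ/∂t(x, t) > 0. -/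
/-!
In the moving frame `ξ = x - ct` the sub-solution is `η e^{μt} ψ(ξ)`, where
`ψ(ξ) = e^{-βξ} cos(πξ/(2R))` (`cosProfile`) is cut off outside `(-R, R)`. Since `K < 2R`, the
kernel only sees `ψ` on `(-3R, 3R)`, where `ψ ≤ 0` off `(-R, R)`; so cutting off only increases
the convolution. The convolution of the untruncated `ψ` follows from the addition formula for the
cosine: `(J * ψ)(ξ) = e^{-βξ} (cos(πξ/(2R)) I_c + sin(πξ/(2R)) I_s)`, with `I_c`, `I_s` the
integrals in the two speed conditions. The second condition makes the `sin` terms cancel against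
the time derivative, and the first makes the remaining `cos` term positive.
-/

open MeasureTheory Real Set

noncomputable def cosProfile (β R ξ : ℝ) : ℝ := exp (-β * ξ) * cos (π * ξ / (2 * R))

theorem cos_nonpos_of_pi_div_two_le_abs {θ : ℝ} (h₁ : π / 2 ≤ |θ|) (h₂ : |θ| ≤ π + π / 2) :
    cos θ ≤ 0 := by
  rw [← cos_abs]
  exact cos_nonpos_of_pi_div_two_le_of_le h₁ h₂

section cosProfile

variable {β R : ℝ}

@[fun_prop]
theorem continuous_cosProfile : Continuous (cosProfile β R) := by
  unfold cosProfile
  fun_prop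

theorem cosProfile_pos (hR : 0 < R) {u : ℝ} (hu : u ∈ Ioo (-R) R) : 0 < cosProfile β R u := by
  have hπ := pi_pos
  refine mul_pos (exp_pos _) (cos_pos_of_mem_Ioo ⟨?_, ?_⟩)
  · rw [lt_div_iff₀ (by positivity)]
    nlinarith [hu.1]
  · rw [div_lt_iff₀ (by positivity)]
    nlinarith [hu.2]

theorem cosProfile_nonpos (hR : 0 < R) {u : ℝ} (h₁ : R ≤ |u|) (h₂ : |u| ≤ 3 * R) :
    cosProfile β R u ≤ 0 := by
  have hπ := pi_pos
  refine mul_nonpos_of_nonneg_of_nonpos (exp_pos _).le (cos_nonpos_of_pi_div_two_le_abs ?_ ?_) <;>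
    rw [abs_div, abs_mul, abs_of_pos hπ, abs_of_pos (by positivity : (0 : ℝ) < 2 * R)]
  · rw [le_div_iff₀ (by positivity)]
    nlinarith
  · rw [div_le_iff₀ (by positivity)]
    nlinarith

theorem cosProfile_sub (ξ z : ℝ) :
    cosProfile β R (ξ - z) =
      exp (-β * ξ) * cos (π * ξ / (2 * R)) * (exp (β * z) * cos (π * z / (2 * R))) +
      exp (-β * ξ) * sin (π * ξ / (2 * R)) * (exp (β * z) * sin (π * z / (2 * R))) := by
  rw [cosProfile, show -β * (ξ - z) = -β * ξ + β * z by ring,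
    show π * (ξ - z) / (2 * R) = π * ξ / (2 * R) - π * z / (2 * R) by ring, exp_add, cos_sub]
  ring

theorem hasDerivAt_cosProfile (ξ : ℝ) :
    HasDerivAt (cosProfile β R)
      (-β * cosProfile β R ξ - π / (2 * R) * exp (-β * ξ) * sin (π * ξ / (2 * R))) ξ := by
  have hexp : HasDerivAt (fun ξ => exp (-β * ξ)) (exp (-β * ξ) * -β) ξ := by
    simpa using ((hasDerivAt_id ξ).const_mul (-β)).exp
  have hcos : HasDerivAt (fun ξ => cos (π * ξ / (2 * R)))
      (-sin (π * ξ / (2 * R)) * (π / (2 * R))) ξ := by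
    simpa using (((hasDerivAt_id ξ).const_mul π).div_const (2 * R)).cos
  unfold cosProfile
  exact (hexp.mul hcos).congr_deriv (by ring)

theorem hasDerivAt_travelingWave (η μ c x t : ℝ) :
    HasDerivAt (fun τ => η * exp (μ * τ) * cosProfile β R (x - c * τ))
      (η * exp (μ * t) * ((μ + β * c) * cosProfile β R (x - c * t) +
        π * c / (2 * R) * exp (-β * (x - c * t)) * sin (π * (x - c * t) / (2 * R)))) t := by
  have hexp : HasDerivAt (fun τ => η * exp (μ * τ)) (η * (exp (μ * t) * μ)) t := by
    simpa using (((hasDerivAt_id t).const_mul μ).exp).const_mul η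
  have hξ : HasDerivAt (fun τ => x - c * τ) (-c) t := by
    simpa using ((hasDerivAt_id t).const_mul c).const_sub x
  have hψ := (hasDerivAt_cosProfile (β := β) (R := R) (x - c * t)).comp t hξ
  refine (hexp.mul hψ).congr_deriv ?_
  rw [Function.comp_apply, cosProfile]
  ring

end cosProfile

section Convolution

variable {J : ℝ → ℝ} {β R K : ℝ}

theorem integrable_exp_mul_kernel_mul (hJc : Continuous J) (hJcs : HasCompactSupport J)
    {g : ℝ → ℝ} (hg : Continuous g) : Integrable (fun y => exp (β * y) * J y * g y) :=
  (by fun_prop : Continuous fun y => exp (β * y) * J y * g y).integrable_of_hasCompactSupport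
    hJcs.mul_left.mul_right

theorem integral_kernel_mul_cosProfile_sub (hJc : Continuous J) (hJcs : HasCompactSupport J)
    (ξ : ℝ) :
    ∫ z, J z * cosProfile β R (ξ - z) =
      exp (-β * ξ) * cos (π * ξ / (2 * R)) *
          (∫ y, exp (β * y) * J y * cos (π * y / (2 * R))) +
        exp (-β * ξ) * sin (π * ξ / (2 * R)) *
          ∫ y, exp (β * y) * J y * sin (π * y / (2 * R)) := by
  have hexpand : ∀ z, J z * cosProfile β R (ξ - z) =
      exp (-β * ξ) * cos (π * ξ / (2 * R)) * (exp (β * z) * J z * cos (π * z / (2 * R))) +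
      exp (-β * ξ) * sin (π * ξ / (2 * R)) * (exp (β * z) * J z * sin (π * z / (2 * R))) := by
    intro z
    rw [cosProfile_sub]
    ring
  simp_rw [hexpand]
  rw [integral_add ((integrable_exp_mul_kernel_mul hJc hJcs (by fun_prop)).const_mul _)
      ((integrable_exp_mul_kernel_mul hJc hJcs (by fun_prop)).const_mul _),
    integral_const_mul, integral_const_mul]

theorem kernel_mul_cosProfile_le_truncated (hR : 0 < R) (hJ0 : ∀ z, 0 ≤ J z)
    (hsupp : ∀ z, z ∉ Icc (-K) K → J z = 0) (hKR : K < 2 * R) {ξ : ℝ} (hξ : ξ ∈ Ioo (-R) R)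
    (u : ℝ) :
    J (ξ - u) * cosProfile β R u ≤ J (ξ - u) * (Ioo (-R) R).indicator (cosProfile β R) u := by
  by_cases hu : u ∈ Ioo (-R) R
  · rw [indicator_of_mem hu]
  rw [indicator_of_notMem hu, mul_zero]
  by_cases hK : ξ - u ∈ Icc (-K) K
  · refine mul_nonpos_of_nonneg_of_nonpos (hJ0 _) (cosProfile_nonpos hR ?_ ?_)
    · contrapose! hu
      exact abs_lt.mp hu
    · exact abs_le.mpr ⟨by linarith [hK.2, hξ.1], by linarith [hK.1, hξ.2]⟩
  · rw [hsupp _ hK, zero_mul]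

theorem integral_kernel_mul_cosProfile_sub_le_truncated (hR : 0 < R) (hJc : Continuous J)
    (hJ0 : ∀ z, 0 ≤ J z) (hsupp : ∀ z, z ∉ Icc (-K) K → J z = 0) (hKR : K < 2 * R)
    {ξ : ℝ} (hξ : ξ ∈ Ioo (-R) R) :
    ∫ z, J z * cosProfile β R (ξ - z) ≤
      ∫ u, J (ξ - u) * (Ioo (-R) R).indicator (cosProfile β R) u := by
  have hJcs : HasCompactSupport J := HasCompactSupport.intro isCompact_Icc hsupp
  have hint : Integrable fun u => J (ξ - u) * cosProfile β R u :=
    (by fun_prop : Continuous fun u => J (ξ - u) * cosProfile β R u)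
      |>.integrable_of_hasCompactSupport (hJcs.comp_homeomorph (Homeomorph.subLeft ξ)).mul_right
  have hreflect : ∫ z, J z * cosProfile β R (ξ - z) = ∫ u, J (ξ - u) * cosProfile β R u := by
    rw [← integral_sub_left_eq_self _ volume ξ]
    congr 1
    ext u
    rw [sub_sub_cancel]
  rw [hreflect]
  refine integral_mono hint ?_ (kernel_mul_cosProfile_le_truncated hR hJ0 hsupp hKR hξ)
  exact (hint.indicator measurableSet_Ioo).congr
    (.of_forall fun u => indicator_mul_right _ (fun u => J (ξ - u)) _)

end Convolution

noncomputable def subSolution (η μ β R c x t : ℝ) : ℝ :=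
  η * exp (μ * t) * (Ioo (-R) R).indicator (cosProfile β R) (x - c * t)

section subSolution

variable {η μ β R c : ℝ} {J : ℝ → ℝ} {K : ℝ}

theorem subSolution_eq_ite (x t : ℝ) :
    subSolution η μ β R c x t =
      if x ∈ Ioo (-R + c * t) (R + c * t) then
        η * exp (μ * t) * exp (-β * (x - c * t)) * cos (π * (x - c * t) / (2 * R))
      else 0 := by
  by_cases h : x - c * t ∈ Ioo (-R) R
  · rw [subSolution, if_pos (sub_mem_Ioo_iff_left.mp h), indicator_of_mem h, cosProfile]
    ring
  · rw [subSolution, if_neg (mt sub_mem_Ioo_iff_left.mpr h), indicator_of_notMem h, mul_zero]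

theorem subSolution_of_mem {x t : ℝ} (h : x - c * t ∈ Ioo (-R) R) :
    subSolution η μ β R c x t = η * exp (μ * t) * cosProfile β R (x - c * t) := by
  rw [subSolution, indicator_of_mem h]

theorem hasDerivAt_subSolution {x t : ℝ} (h : x - c * t ∈ Ioo (-R) R) :
    HasDerivAt (fun τ => subSolution η μ β R c x τ)
      (η * exp (μ * t) * ((μ + β * c) * cosProfile β R (x - c * t) +
        π * c / (2 * R) * exp (-β * (x - c * t)) * sin (π * (x - c * t) / (2 * R)))) t := by
  have hopen : IsOpen ((fun τ => x - c * τ) ⁻¹' Ioo (-R) R) := isOpen_Ioo.preimage (by fun_prop)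
  refine (hasDerivAt_travelingWave η μ c x t).congr_of_eventuallyEq ?_
  filter_upwards [hopen.mem_nhds h] with τ hτ
  exact subSolution_of_mem hτ

theorem integral_kernel_mul_subSolution (x t : ℝ) :
    ∫ y, J (x - y) * subSolution η μ β R c y t =
      η * exp (μ * t) * ∫ u, J (x - c * t - u) * (Ioo (-R) R).indicator (cosProfile β R) u := by
  rw [← integral_const_mul, ← integral_add_right_eq_self _ (c * t)]
  congr 1
  ext u
  rw [subSolution, add_sub_cancel_right, show x - (u + c * t) = x - c * t - u by ring]
  ring

theorem integral_kernel_mul_subSolution_ge (hη : 0 ≤ η) (hR : 0 < R) (hJc : Continuous J)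
    (hJ0 : ∀ z, 0 ≤ J z) (hsupp : ∀ z, z ∉ Icc (-K) K → J z = 0) (hKR : K < 2 * R)
    {x t : ℝ} (h : x - c * t ∈ Ioo (-R) R) :
    η * exp (μ * t) *
        (exp (-β * (x - c * t)) * cos (π * (x - c * t) / (2 * R)) *
            (∫ y, exp (β * y) * J y * cos (π * y / (2 * R))) +
          exp (-β * (x - c * t)) * sin (π * (x - c * t) / (2 * R)) *
            ∫ y, exp (β * y) * J y * sin (π * y / (2 * R))) ≤
      ∫ y, J (x - y) * subSolution η μ β R c y t := by
  rw [integral_kernel_mul_subSolution,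
    ← integral_kernel_mul_cosProfile_sub hJc (HasCompactSupport.intro isCompact_Icc hsupp)]
  exact mul_le_mul_of_nonneg_left
    (integral_kernel_mul_cosProfile_sub_le_truncated hR hJc hJ0 hsupp hKR h) (by positivity)

end subSolution

theorem stmt11_general (J : ℝ → ℝ) (d m η β R μ c K : ℝ)
    (hd : 0 < d) (hη : 0 < η) (hβ : 0 < β) (hR : 0 < R)
    (hJc : Continuous J) (hJ0 : ∀ z, 0 ≤ J z)
    (hsupp : ∀ z, z ∉ Set.Icc (-K) K → J z = 0) (hKR : K < 2 * R)
    (hc1 : c < (1 / β) * (m - μ + d * ∫ y : ℝ, Real.exp (β * y) * J y * Real.cos (π * y / (2 * R))))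
    (hc2 : c = (2 * R * d / π) * ∫ y : ℝ, Real.exp (β * y) * J y * Real.sin (π * y / (2 * R)))
    (φ φt : ℝ → ℝ → ℝ)
    (hφ : ∀ x t, φ x t =
      if x ∈ Set.Ioo (-R + c * t) (R + c * t) then
        η * Real.exp (μ * t) * Real.exp (-β * (x - c * t)) * Real.cos (π * (x - c * t) / (2 * R))
      else 0)
    (hφt : ∀ x t, x ∈ Set.Ioo (-R + c * t) (R + c * t) →
      HasDerivAt (fun τ => φ x τ) (φt x t) t) :
    ∀ x t : ℝ, x ∈ Set.Ioo (-R + c * t) (R + c * t) →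
      0 < d * (∫ y : ℝ, J (x - y) * φ y t) + m * φ x t - φt x t := by
  obtain rfl : φ = subSolution η μ β R c := by
    ext y τ
    rw [hφ, subSolution_eq_ite]
  intro x t hx
  have hξ : x - c * t ∈ Ioo (-R) R := sub_mem_Ioo_iff_left.mpr hx
  have hconv := integral_kernel_mul_subSolution_ge (μ := μ) (β := β) hη.le hR hJc hJ0 hsupp hKR hξ
  rw [subSolution_of_mem hξ, (hφt x t hx).unique (hasDerivAt_subSolution hξ)]
  set ξ := x - c * t
  set A := η * exp (μ * t)
  set Ic := ∫ y, exp (β * y) * J y * cos (π * y / (2 * R))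
  set Is := ∫ y, exp (β * y) * J y * sin (π * y / (2 * R))
  have hcos_speed : β * c < m - μ + d * Ic := by
    rwa [one_div_mul_eq_div, lt_div_iff₀' hβ] at hc1
  have hsin_speed : d * Is = π * c / (2 * R) := by
    rw [hc2]
    field_simp
  have hreduce : d * (A * (exp (-β * ξ) * cos (π * ξ / (2 * R)) * Ic +
        exp (-β * ξ) * sin (π * ξ / (2 * R)) * Is)) + m * (A * cosProfile β R ξ) -
      A * ((μ + β * c) * cosProfile β R ξ +
        π * c / (2 * R) * exp (-β * ξ) * sin (π * ξ / (2 * R))) =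
      A * cosProfile β R ξ * (m - μ + d * Ic - β * c) := by
    rw [← hsin_speed, cosProfile]
    ring
  have hpos := mul_pos (mul_pos (by positivity : 0 < A) (cosProfile_pos (β := β) hR hξ))
    (sub_pos.mpr hcos_speed)
  linarith [mul_le_mul_of_nonneg_left hconv hd.le]

/-- Sub-solution verification: with `φ(x,t) = η e^{μt} e^{-β(x-ct)} cos(π(x-ct)/(2R))` inside the
moving interval `(-R + ct, R + ct)` and `0` outside, and with `c` satisfying the two stated speed
conditions, one has `d ∫ J(x-y) φ(y,t) dy + m φ(x,t) - ∂φ/∂t(x,t) > 0` inside the interval. -/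
theorem stmt11 (J : ℝ → ℝ) (d m η β R μ c K : ℝ)
    (hd : 0 < d) (hm : 0 < m) (hη : 0 < η) (hβ : 0 < β) (hR : 0 < R) (hμ : 0 < μ) (hc : 0 < c)
    (hJc : Continuous J) (hJ0 : ∀ z, 0 ≤ J z) (hJe : ∀ z, J (-z) = J z)
    (hsupp : ∀ z, z ∉ Set.Icc (-K) K → J z = 0) (hJint : ∫ z : ℝ, J z = 1) (hKR : K < 2 * R)
    (hc1 : c < (1 / β) * (m - μ + d * ∫ y : ℝ, Real.exp (β * y) * J y * Real.cos (π * y / (2 * R))))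
    (hc2 : c = (2 * R * d / π) * ∫ y : ℝ, Real.exp (β * y) * J y * Real.sin (π * y / (2 * R)))
    (φ φt : ℝ → ℝ → ℝ)
    (hφ : ∀ x t, φ x t =
      if x ∈ Set.Ioo (-R + c * t) (R + c * t) then
        η * Real.exp (μ * t) * Real.exp (-β * (x - c * t)) * Real.cos (π * (x - c * t) / (2 * R))
      else 0)
    (hφt : ∀ x t, x ∈ Set.Ioo (-R + c * t) (R + c * t) →
      HasDerivAt (fun τ => φ x τ) (φt x t) t) :
    ∀ x t : ℝ, x ∈ Set.Ioo (-R + c * t) (R + c * t) →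
      0 < d * (∫ y : ℝ, J (x - y) * φ y t) + m * φ x t - φt x t :=
  stmt11_general J d m η β R μ c K hd hη hβ hR hJc hJ0 hsupp hKR hc1 hc2 φ φt hφ hφt
end
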